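/- arXiv:1503.03773 — 2 statements merged into one kernel-verified Lean document; each statement's English description precedes it below -/
import Mathlib

section
/- Let G be a symmetric positive semidefinite K×K matrix, b ∈ ℝ^K, μ > 0, and define L(x) = (1/2) xᵀ G x - bᵀ x + μ‖x‖₁. Let x, x̂ ∈ ℝ^K and suppose that for every k, x̂ₖ minimizes over y the function (1/2) G_{kk} y² - (bₖ - Σ_{j≠k} G_{kj} xⱼ) y + μ|y| + (1/2) cₖ (y - xₖ)², with cₖ ≥ 0 and G_{kk} + cₖ > 0. Then for all γ ∈ [0,1]: L(x + γ(x̂ - x)) - L(x) ≤ -γ (c_min - (γ/2) λ_max(G)) ‖x̂ - x‖₂², where c_min = min_k (G_{kk} + cₖ) and λ_max(G) is the largest eigenvalue of G. -/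
/-!
Write `d = x̂ - x`. Along the segment `x + γ d` the smooth part of `L` is a quadratic in `γ` with
leading coefficient `½ dᵀ G d ≤ ½ λ_max(G) ‖d‖₂²`, and the `ℓ₁` part is convex, so
`L(x + γ d) - L(x) ≤ γ (dᵀ (G x - b) + μ (‖x̂‖₁ - ‖x‖₁)) + ½ γ² dᵀ G d` for `γ ∈ [0, 1]`.
Each `x̂ₖ` minimizes its one-dimensional proximal problem, and its first-order optimality tested in
the direction of `xₖ` bounds the `k`-th summand of the bracket by `-(G_kk + cₖ) dₖ²`; summing
gives `-c_min ‖d‖₂²`.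
-/

open Matrix Filter Topology

theorem nonneg_of_forall_nonneg_mul_add_sq_mul {S C : ℝ}
    (h : ∀ t ∈ Set.Ioc (0 : ℝ) 1, 0 ≤ t * S + t ^ 2 * C) : 0 ≤ S := by
  have hlim : Tendsto (fun t : ℝ => -(t * C)) (𝓝[>] 0) (𝓝 0) := by
    have : Continuous fun t : ℝ => -(t * C) := by fun_prop
    simpa using (this.tendsto 0).mono_left nhdsWithin_le_nhds
  refine le_of_tendsto hlim ?_
  filter_upwards [Ioc_mem_nhdsGT one_pos] with t ht
  have := h t ht
  nlinarith [ht.1]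

theorem abs_add_mul_sub_le {a b t : ℝ} (ht₀ : 0 ≤ t) (ht₁ : t ≤ 1) :
    |a + t * (b - a)| ≤ |a| + t * (|b| - |a|) :=
  calc |a + t * (b - a)| = |(1 - t) * a + t * b| := by ring_nf
    _ ≤ |(1 - t) * a| + |t * b| := abs_add_le _ _
    _ = |a| + t * (|b| - |a|) := by
      rw [abs_mul, abs_mul, abs_of_nonneg (sub_nonneg.mpr ht₁), abs_of_nonneg ht₀]; ring

theorem Matrix.IsSymm.dotProduct_mulVec_comm {n R : Type*} [Fintype n] [CommSemiring R]
    {A : Matrix n n R} (hA : A.IsSymm) (u v : n → R) :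
    u ⬝ᵥ A *ᵥ v = v ⬝ᵥ A *ᵥ u := by
  rw [dotProduct_mulVec, ← mulVec_transpose, hA.eq, dotProduct_comm]

theorem Matrix.IsSymm.dotProduct_mulVec_add_smul {n R : Type*} [Fintype n] [CommRing R]
    {A : Matrix n n R} (hA : A.IsSymm) (x d : n → R) (γ : R) :
    (x + γ • d) ⬝ᵥ A *ᵥ (x + γ • d)
      = x ⬝ᵥ A *ᵥ x + 2 * γ * (d ⬝ᵥ A *ᵥ x) + γ ^ 2 * (d ⬝ᵥ A *ᵥ d) := by
  simp only [mulVec_add, mulVec_smul, dotProduct_add, add_dotProduct, dotProduct_smul,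
    smul_dotProduct, smul_eq_mul, hA.dotProduct_mulVec_comm x d]
  ring

open scoped MatrixOrder in
theorem Matrix.IsHermitian.dotProduct_mulVec_le {n : Type*} [Fintype n] [DecidableEq n]
    {A : Matrix n n ℝ} (hA : A.IsHermitian) {r : ℝ} (hr : ∀ i, hA.eigenvalues i ≤ r)
    (d : n → ℝ) : d ⬝ᵥ A *ᵥ d ≤ r * (d ⬝ᵥ d) := by
  have hle : A ≤ algebraMap ℝ (Matrix n n ℝ) r := by
    refine le_algebraMap_of_spectrum_le (fun s hs => ?_) hA.isSelfAdjoint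
    rw [hA.spectrum_real_eq_range_eigenvalues] at hs
    obtain ⟨i, rfl⟩ := hs
    exact hr i
  have := (Matrix.le_iff.mp hle).dotProduct_mulVec_nonneg d
  rw [star_trivial, sub_mulVec, dotProduct_sub, Algebra.algebraMap_eq_smul_one, smul_mulVec,
    one_mulVec, dotProduct_smul, smul_eq_mul] at this
  linarith

section Lasso

variable {n : Type*} [Fintype n]

noncomputable def lassoObjective (G : Matrix n n ℝ) (b : n → ℝ) (μ : ℝ) (x : n → ℝ) : ℝ :=
  (1/2) * (x ⬝ᵥ G *ᵥ x) - b ⬝ᵥ x + μ * ∑ i, |x i|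

theorem sum_abs_add_smul_sub_le (x xh : n → ℝ) {γ : ℝ} (hγ₀ : 0 ≤ γ) (hγ₁ : γ ≤ 1) :
    ∑ i, |(x + γ • (xh - x)) i| ≤ ∑ i, |x i| + γ * (∑ i, |xh i| - ∑ i, |x i|) := by
  rw [← Finset.sum_sub_distrib, Finset.mul_sum, ← Finset.sum_add_distrib]
  exact Finset.sum_le_sum fun i _ => by simpa using abs_add_mul_sub_le hγ₀ hγ₁

theorem lassoObjective_add_smul_sub_le (G : Matrix n n ℝ) (hG : G.IsSymm) (b : n → ℝ) {μ : ℝ}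
    (hμ : 0 ≤ μ) (x xh : n → ℝ) {γ : ℝ} (hγ₀ : 0 ≤ γ) (hγ₁ : γ ≤ 1) :
    lassoObjective G b μ (x + γ • (xh - x)) - lassoObjective G b μ x
      ≤ γ * ((xh - x) ⬝ᵥ (G *ᵥ x - b) + μ * (∑ i, |xh i| - ∑ i, |x i|))
        + γ ^ 2 / 2 * ((xh - x) ⬝ᵥ G *ᵥ (xh - x)) := by
  have hℓ₁ := mul_le_mul_of_nonneg_left (sum_abs_add_smul_sub_le x xh hγ₀ hγ₁) hμ
  rw [dotProduct_sub, dotProduct_comm (xh - x) b]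
  simp only [lassoObjective, hG.dotProduct_mulVec_add_smul, dotProduct_add, dotProduct_smul,
    smul_eq_mul]
  linarith

variable [DecidableEq n]

noncomputable def coordinateProxObjective (G : Matrix n n ℝ) (b : n → ℝ) (μ : ℝ) (x c : n → ℝ)
    (k : n) (y : ℝ) : ℝ :=
  (1/2) * G k k * y ^ 2 - (b k - ∑ j ∈ Finset.univ.erase k, G k j * x j) * y + μ * |y|
    + (1/2) * c k * (y - x k) ^ 2

theorem coordinate_step_le_of_isMinOn (G : Matrix n n ℝ) (b : n → ℝ) {μ : ℝ} (hμ : 0 ≤ μ)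
    (x xh c : n → ℝ) (k : n)
    (hmin : IsMinOn (coordinateProxObjective G b μ x c k) Set.univ (xh k)) :
    (G *ᵥ x - b) k * (xh k - x k) + μ * (|xh k| - |x k|) ≤ -(G k k + c k) * (xh k - x k) ^ 2 := by
  set β := b k - ∑ j ∈ Finset.univ.erase k, G k j * x j
  have hGx : (G *ᵥ x) k = G k k * x k + ∑ j ∈ Finset.univ.erase k, G k j * x j :=
    (Finset.add_sum_erase _ (fun j => G k j * x j) (Finset.mem_univ k)).symm
  -- `(G k k + c k) * xh k - β - c k * x k` is the derivative of the smooth part at `xh k`.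
  have hvar : 0 ≤ ((G k k + c k) * xh k - β - c k * x k) * (x k - xh k)
      + μ * (|x k| - |xh k|) := by
    refine nonneg_of_forall_nonneg_mul_add_sq_mul (C := (G k k + c k) / 2 * (x k - xh k) ^ 2)
      fun t ht => ?_
    have hle := isMinOn_univ_iff.mp hmin (xh k + t * (x k - xh k))
    have habs :=
      mul_le_mul_of_nonneg_left (abs_add_mul_sub_le (a := xh k) (b := x k) ht.1.le ht.2) hμ
    simp only [coordinateProxObjective] at hle
    nlinarith
  rw [Pi.sub_apply, hGx]
  nlinarith

theorem lasso_linear_term_le (G : Matrix n n ℝ) (b : n → ℝ) {μ : ℝ} (hμ : 0 ≤ μ)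
    (x xh c : n → ℝ) (hmin : ∀ k, IsMinOn (coordinateProxObjective G b μ x c k) Set.univ (xh k))
    {m : ℝ} (hm : ∀ k, m ≤ G k k + c k) :
    (xh - x) ⬝ᵥ (G *ᵥ x - b) + μ * (∑ i, |xh i| - ∑ i, |x i|) ≤ -m * ∑ i, (xh i - x i) ^ 2 := by
  rw [← Finset.sum_sub_distrib, Finset.mul_sum, Finset.mul_sum, dotProduct,
    ← Finset.sum_add_distrib]
  refine Finset.sum_le_sum fun k _ => ?_
  have := coordinate_step_le_of_isMinOn G b hμ x xh c k (hmin k)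
  rw [Pi.sub_apply]
  nlinarith [hm k, sq_nonneg (xh k - x k)]

end Lasso

theorem stmt_2_general (K : ℕ) (hK : 0 < K) (G : Matrix (Fin K) (Fin K) ℝ) (hG : G.PosSemidef)
    (b : Fin K → ℝ) (μ : ℝ) (hμ : 0 < μ) (x xh c : Fin K → ℝ)
    (hbr : ∀ k, ∀ y : ℝ,
      (1/2) * G k k * (xh k)^2 - (b k - ∑ j ∈ Finset.univ.erase k, G k j * x j) * xh k
        + μ * |xh k| + (1/2) * c k * (xh k - x k)^2
      ≤ (1/2) * G k k * y^2 - (b k - ∑ j ∈ Finset.univ.erase k, G k j * x j) * y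
        + μ * |y| + (1/2) * c k * (y - x k)^2)
    (γ : ℝ) (hγ : γ ∈ Set.Icc (0:ℝ) 1) :
    ((1/2) * ((x + γ • (xh - x)) ⬝ᵥ G.mulVec (x + γ • (xh - x)))
        - b ⬝ᵥ (x + γ • (xh - x)) + μ * ∑ i, |(x + γ • (xh - x)) i|)
      - ((1/2) * (x ⬝ᵥ G.mulVec x) - b ⬝ᵥ x + μ * ∑ i, |x i|)
    ≤ -γ * ((Finset.univ.inf' (Finset.univ_nonempty_iff.mpr ⟨⟨0, hK⟩⟩)
          (fun k => G k k + c k))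
        - (1/2) * (Finset.univ.sup' (Finset.univ_nonempty_iff.mpr ⟨⟨0, hK⟩⟩)
          hG.1.eigenvalues) * γ)
      * ∑ i, (xh i - x i)^2 := by
  obtain ⟨hγ₀, hγ₁⟩ := hγ
  set cmin := Finset.univ.inf' _ fun k => G k k + c k
  set lmax := Finset.univ.sup' _ hG.1.eigenvalues
  have hdescent := lassoObjective_add_smul_sub_le G (isHermitian_iff_isSymm.mp hG.1) b hμ.le
    x xh hγ₀ hγ₁
  have hlinear := lasso_linear_term_le G b hμ.le x xh c (fun k => isMinOn_univ_iff.mpr (hbr k))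
    (m := cmin) fun k => Finset.inf'_le _ (Finset.mem_univ k)
  have hquad := hG.1.dotProduct_mulVec_le (r := lmax)
    (fun i => Finset.le_sup' _ (Finset.mem_univ i)) (xh - x)
  have hnorm : (xh - x) ⬝ᵥ (xh - x) = ∑ i, (xh i - x i) ^ 2 := by simp [dotProduct, sq]
  rw [hnorm] at hquad
  change lassoObjective G b μ (x + γ • (xh - x)) - lassoObjective G b μ x ≤ _
  linarith [mul_le_mul_of_nonneg_left hlinear hγ₀, mul_le_mul_of_nonneg_left hquad (sq_nonneg γ)]

theorem stmt_2 (K : ℕ) (hK : 0 < K) (G : Matrix (Fin K) (Fin K) ℝ) (hG : G.PosSemidef)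
    (b : Fin K → ℝ) (μ : ℝ) (hμ : 0 < μ) (x xh c : Fin K → ℝ)
    (hc : ∀ k, 0 ≤ c k) (hGc : ∀ k, 0 < G k k + c k)
    (hbr : ∀ k, ∀ y : ℝ,
      (1/2) * G k k * (xh k)^2 - (b k - ∑ j ∈ Finset.univ.erase k, G k j * x j) * xh k
        + μ * |xh k| + (1/2) * c k * (xh k - x k)^2
      ≤ (1/2) * G k k * y^2 - (b k - ∑ j ∈ Finset.univ.erase k, G k j * x j) * y
        + μ * |y| + (1/2) * c k * (y - x k)^2)
    (γ : ℝ) (hγ : γ ∈ Set.Icc (0:ℝ) 1) :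
    ((1/2) * ((x + γ • (xh - x)) ⬝ᵥ G.mulVec (x + γ • (xh - x)))
        - b ⬝ᵥ (x + γ • (xh - x)) + μ * ∑ i, |(x + γ • (xh - x)) i|)
      - ((1/2) * (x ⬝ᵥ G.mulVec x) - b ⬝ᵥ x + μ * ∑ i, |x i|)
    ≤ -γ * ((Finset.univ.inf' (Finset.univ_nonempty_iff.mpr ⟨⟨0, hK⟩⟩)
          (fun k => G k k + c k))
        - (1/2) * (Finset.univ.sup' (Finset.univ_nonempty_iff.mpr ⟨⟨0, hK⟩⟩)
          hG.1.eigenvalues) * γ)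
      * ∑ i, (xh i - x i)^2 :=
  stmt_2_general K hK G hG b μ hμ x xh c hbr γ hγ
end

section
/- Let G be symmetric positive semidefinite, x, x̂ ∈ ℝ^K, and suppose for every k that (1/2)G_{kk}x̂ₖ² - rₖx̂ₖ + μ|x̂ₖ| + (1/2)cₖ(x̂ₖ - xₖ)² ≤ (1/2)G_{kk}xₖ² - rₖxₖ + μ|xₖ|, where rₖ = bₖ - Σ_{j≠k}G_{kj}xⱼ, cₖ ≥ 0, μ > 0. Then (Gx - b)ᵀ(x̂ - x) + μ(‖x̂‖₁ - ‖x‖₁) ≤ -Σ_k (G_{kk}/2 + cₖ/2)(x̂ₖ - xₖ)². -/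
open Matrix

/- The quadratic part of the coordinate objective expands around `x` as
`½ g x̂² - r x̂ - (½ g x² - r x) = (g x - r)(x̂ - x) + (g/2)(x̂ - x)²`, so the descent inequality for
one coordinate is a bound on the linearized decrease `(g x - r)(x̂ - x) + μ(|x̂| - |x|)`. -/
theorem linearized_decrease_le_of_coord_descent {g r μ c x xh : ℝ}
    (h : (1/2) * g * xh^2 - r * xh + μ * |xh| + (1/2) * c * (xh - x)^2
      ≤ (1/2) * g * x^2 - r * x + μ * |x|) :
    (g * x - r) * (xh - x) + μ * (|xh| - |x|) ≤ -((g / 2 + c / 2) * (xh - x)^2) := by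
  linarith [show (1/2) * g * xh^2 - r * xh - ((1/2) * g * x^2 - r * x)
    = (g * x - r) * (xh - x) + g / 2 * (xh - x)^2 by ring]

theorem Matrix.mulVec_apply_eq_diag_add_sum_erase {ι : Type*} [Fintype ι] [DecidableEq ι]
    (G : Matrix ι ι ℝ) (x : ι → ℝ) (k : ι) :
    (G *ᵥ x) k = G k k * x k + ∑ j ∈ Finset.univ.erase k, G k j * x j :=
  (Finset.add_sum_erase _ _ (Finset.mem_univ k)).symm

theorem stmt_15_general (K : ℕ) (G : Matrix (Fin K) (Fin K) ℝ)
    (b x xh c : Fin K → ℝ) (μ : ℝ)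
    (h : ∀ k,
      (1/2) * G k k * (xh k)^2 - (b k - ∑ j ∈ Finset.univ.erase k, G k j * x j) * xh k
        + μ * |xh k| + (1/2) * c k * (xh k - x k)^2
      ≤ (1/2) * G k k * (x k)^2 - (b k - ∑ j ∈ Finset.univ.erase k, G k j * x j) * x k
        + μ * |x k|) :
    ((G.mulVec x - b) ⬝ᵥ (xh - x)) + μ * ((∑ i, |xh i|) - ∑ i, |x i|)
      ≤ -∑ k, (G k k / 2 + c k / 2) * (xh k - x k)^2 := by
  have coord (k : Fin K) : ((G *ᵥ x) k - b k) * (xh k - x k) + μ * (|xh k| - |x k|)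
      ≤ -((G k k / 2 + c k / 2) * (xh k - x k)^2) := by
    have hk := linearized_decrease_le_of_coord_descent (h k)
    rw [mulVec_apply_eq_diag_add_sum_erase]
    linarith
  calc ((G *ᵥ x - b) ⬝ᵥ (xh - x)) + μ * ((∑ i, |xh i|) - ∑ i, |x i|)
      = ∑ k, (((G *ᵥ x) k - b k) * (xh k - x k) + μ * (|xh k| - |x k|)) := by
        rw [Finset.sum_add_distrib, ← Finset.sum_sub_distrib, Finset.mul_sum]
        rfl
    _ ≤ -∑ k, (G k k / 2 + c k / 2) * (xh k - x k)^2 := by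
        rw [← Finset.sum_neg_distrib]
        exact Finset.sum_le_sum fun k _ => coord k

theorem stmt_15 (K : ℕ) (G : Matrix (Fin K) (Fin K) ℝ) (hG : G.PosSemidef)
    (b x xh c : Fin K → ℝ) (μ : ℝ) (hμ : 0 < μ) (hc : ∀ k, 0 ≤ c k)
    (h : ∀ k,
      (1/2) * G k k * (xh k)^2 - (b k - ∑ j ∈ Finset.univ.erase k, G k j * x j) * xh k
        + μ * |xh k| + (1/2) * c k * (xh k - x k)^2
      ≤ (1/2) * G k k * (x k)^2 - (b k - ∑ j ∈ Finset.univ.erase k, G k j * x j) * x k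
        + μ * |x k|) :
    ((G.mulVec x - b) ⬝ᵥ (xh - x)) + μ * ((∑ i, |xh i|) - ∑ i, |x i|)
      ≤ -∑ k, (G k k / 2 + c k / 2) * (xh k - x k)^2 :=
  stmt_15_general K G b x xh c μ h
end
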